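/- arXiv:2104.14101 — 3 statements merged into one kernel-verified Lean document; each statement's English description precedes it below -/
import Mathlib

section
/- Let ρ ∈ (0,1) and let S ∈ ℝ^{m×n} be any matrix such that ‖C_S − I_d‖₂ ≤ √ρ. Then for every x ∈ ℝ^d, the exact and approximate Newton decrements satisfy |δ_x − δ̃_x| ≤ √ρ · δ̃_x. -/
open Matrix MeasureTheory ProbabilityTheory Real Polynomial
open scoped Classical

noncomputable section

/-- Spectral (operator) norm of a real matrix, via its action on Euclidean space. -/
def matSpectralNorm {k l : ℕ} (M : Matrix (Fin k) (Fin l) ℝ) : ℝ :=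
  ‖LinearMap.toContinuousLinearMap (Matrix.toEuclideanLin M)‖

/-- Positive semidefinite square root of a matrix (junk value `0` if `M` is not
positive semidefinite). -/
def msqrt {d : ℕ} (M : Matrix (Fin d) (Fin d) ℝ) : Matrix (Fin d) (Fin d) ℝ :=
  if h : M.PosSemidef then
    h.1.eigenvectorUnitary.1 * diagonal (Real.sqrt ∘ h.1.eigenvalues) *
      (star h.1.eigenvectorUnitary : Matrix (Fin d) (Fin d) ℝ) else 0

/-- The Hessian `H = Aᵀ A + ν² Λ`. -/
def Hmat {n d : ℕ} (A : Matrix (Fin n) (Fin d) ℝ) (ν : ℝ)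
    (Λ : Matrix (Fin d) (Fin d) ℝ) : Matrix (Fin d) (Fin d) ℝ :=
  Aᵀ * A + ν ^ 2 • Λ

/-- The sketched Hessian `H_S = Aᵀ Sᵀ S A + ν² Λ`. -/
def HSmat {n d m : ℕ} (A : Matrix (Fin n) (Fin d) ℝ) (ν : ℝ)
    (Λ : Matrix (Fin d) (Fin d) ℝ) (S : Matrix (Fin m) (Fin n) ℝ) :
    Matrix (Fin d) (Fin d) ℝ :=
  Aᵀ * Sᵀ * S * A + ν ^ 2 • Λ

/-- `C_S = H^{-1/2} H_S H^{-1/2}`. -/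
def CSmat {n d m : ℕ} (A : Matrix (Fin n) (Fin d) ℝ) (ν : ℝ)
    (Λ : Matrix (Fin d) (Fin d) ℝ) (S : Matrix (Fin m) (Fin n) ℝ) :
    Matrix (Fin d) (Fin d) ℝ :=
  (msqrt (Hmat A ν Λ))⁻¹ * HSmat A ν Λ S * (msqrt (Hmat A ν Λ))⁻¹

/-- The minimizer `x* = H⁻¹ b`. -/
def xstar {n d : ℕ} (A : Matrix (Fin n) (Fin d) ℝ) (ν : ℝ)
    (Λ : Matrix (Fin d) (Fin d) ℝ) (b : Fin d → ℝ) : Fin d → ℝ :=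
  (Hmat A ν Λ)⁻¹.mulVec b

/-- The gradient `∇f(x) = H x - b`. -/
def gradf {n d : ℕ} (A : Matrix (Fin n) (Fin d) ℝ) (ν : ℝ)
    (Λ : Matrix (Fin d) (Fin d) ℝ) (b : Fin d → ℝ) (x : Fin d → ℝ) : Fin d → ℝ :=
  (Hmat A ν Λ).mulVec x - b

/-- The exact error `δ_x = (1/2)(x - x*)ᵀ H (x - x*)`. -/
def deltaEx {n d : ℕ} (A : Matrix (Fin n) (Fin d) ℝ) (ν : ℝ)
    (Λ : Matrix (Fin d) (Fin d) ℝ) (b : Fin d → ℝ) (x : Fin d → ℝ) : ℝ :=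
  (1 / 2) * ((x - xstar A ν Λ b) ⬝ᵥ (Hmat A ν Λ).mulVec (x - xstar A ν Λ b))

/-- The approximate Newton decrement `δ̃_x = (1/2) ∇f(x)ᵀ H_S⁻¹ ∇f(x)`. -/
def deltaApx {n d m : ℕ} (A : Matrix (Fin n) (Fin d) ℝ) (ν : ℝ)
    (Λ : Matrix (Fin d) (Fin d) ℝ) (b : Fin d → ℝ)
    (S : Matrix (Fin m) (Fin n) ℝ) (x : Fin d → ℝ) : ℝ :=
  (1 / 2) * (gradf A ν Λ b x ⬝ᵥ (HSmat A ν Λ S)⁻¹.mulVec (gradf A ν Λ b x))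

/-!
With `R = H^{1/2}` and `u = R⁻¹ ∇f(x)` one has `2 δ_x = uᵀu` and `2 δ̃_x = uᵀ C_S⁻¹ u`.
Substituting `v = C_S^{-1/2} u` turns these into `vᵀ C_S v` and `vᵀv`, so
`2 (δ_x - δ̃_x) = vᵀ (C_S - I) v`, whose absolute value is at most `‖C_S - I‖₂ vᵀv = 2 ‖C_S - I‖₂ δ̃_x`.
-/

section SquareRoot

variable {d : ℕ} {M : Matrix (Fin d) (Fin d) ℝ}

lemma msqrt_mul_self (hM : M.PosSemidef) : msqrt M * msqrt M = M := by
  rw [msqrt, dif_pos hM]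
  set U := hM.1.eigenvectorUnitary
  set D := diagonal (Real.sqrt ∘ hM.1.eigenvalues)
  have hDD : D * D = diagonal hM.1.eigenvalues := by
    rw [diagonal_mul_diagonal]
    exact congrArg diagonal (funext fun i => Real.mul_self_sqrt (hM.eigenvalues_nonneg i))
  calc U.1 * D * star U.1 * (U.1 * D * star U.1)
        = U.1 * (D * (star U.1 * U.1) * D) * star U.1 := by simp only [Matrix.mul_assoc]
    _ = M := by
        rw [Unitary.coe_star_mul_self, Matrix.mul_one, hDD]
        conv_rhs => rw [hM.1.spectral_theorem]
        rfl

lemma isHermitian_msqrt (hM : M.PosSemidef) : (msqrt M).IsHermitian := by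
  rw [msqrt, dif_pos hM]
  exact isHermitian_mul_mul_conjTranspose _ (isHermitian_diagonal _)

lemma isUnit_msqrt (hM : M.PosDef) : IsUnit (msqrt M) := by
  refine (isUnit_iff_isUnit_det _).mpr (isUnit_iff_ne_zero.mpr fun h => hM.det_pos.ne' ?_)
  rw [← msqrt_mul_self hM.posSemidef, det_mul, h, mul_zero]

end SquareRoot

lemma abs_dotProduct_mulVec_le_matSpectralNorm {k : ℕ} (M : Matrix (Fin k) (Fin k) ℝ)
    (v : Fin k → ℝ) : |v ⬝ᵥ M *ᵥ v| ≤ matSpectralNorm M * (v ⬝ᵥ v) := by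
  set T := LinearMap.toContinuousLinearMap (toEuclideanLin M)
  set w : EuclideanSpace ℝ (Fin k) := WithLp.toLp 2 v
  have hquad : v ⬝ᵥ M *ᵥ v = inner ℝ w (T w) := by
    simp [T, w, PiLp.inner_apply, dotProduct, mul_comm]
  have hnorm : v ⬝ᵥ v = ‖w‖ ^ 2 := by
    rw [← real_inner_self_eq_norm_sq, PiLp.inner_apply]
    simp [w, dotProduct, sq]
  rw [hquad, hnorm, matSpectralNorm]
  calc |inner ℝ w (T w)| ≤ ‖w‖ * ‖T w‖ := abs_real_inner_le_norm w (T w)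
    _ ≤ ‖w‖ * (‖T‖ * ‖w‖) := by gcongr; exact T.le_opNorm w
    _ = ‖T‖ * ‖w‖ ^ 2 := by ring

section QuadraticForms

variable {ι : Type*} [Fintype ι]

lemma Matrix.IsHermitian.mulVec_dotProduct_real {R : Matrix ι ι ℝ} (hR : R.IsHermitian)
    (a b : ι → ℝ) : R *ᵥ a ⬝ᵥ b = a ⬝ᵥ R *ᵥ b := by
  rw [dotProduct_mulVec, ← mulVec_transpose, ← conjTranspose_eq_transpose_of_trivial, hR]

lemma posDef_transpose_mul_self_add_smul {k : Type*} [Fintype k] (B : Matrix k ι ℝ)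
    {Λ : Matrix ι ι ℝ} (hΛ : Λ.PosDef) {c : ℝ} (hc : 0 < c) : (Bᵀ * B + c • Λ).PosDef := by
  rw [← conjTranspose_eq_transpose_of_trivial]
  exact PosDef.posSemidef_add (posSemidef_conjTranspose_mul_self B) (hΛ.smul hc)

variable [DecidableEq ι]

lemma dotProduct_mulVec_mul_self_eq {R : Matrix ι ι ℝ} (hR : R.IsHermitian) (hRu : IsUnit R)
    (e : ι → ℝ) :
    e ⬝ᵥ (R * R) *ᵥ e = R⁻¹ *ᵥ (R * R) *ᵥ e ⬝ᵥ R⁻¹ *ᵥ (R * R) *ᵥ e := by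
  have hRe : R⁻¹ *ᵥ (R * R) *ᵥ e = R *ᵥ e := by
    rw [mulVec_mulVec, ← Matrix.mul_assoc, nonsing_inv_mul _ ((isUnit_iff_isUnit_det R).mp hRu),
      Matrix.one_mul]
  rw [hRe, hR.mulVec_dotProduct_real, mulVec_mulVec]

lemma dotProduct_inv_mulVec_eq_conj {R N : Matrix ι ι ℝ} (hR : R.IsHermitian) (hRu : IsUnit R)
    (g : ι → ℝ) : g ⬝ᵥ N⁻¹ *ᵥ g = R⁻¹ *ᵥ g ⬝ᵥ (R⁻¹ * N * R⁻¹)⁻¹ *ᵥ R⁻¹ *ᵥ g := by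
  have hdet := (isUnit_iff_isUnit_det R).mp hRu
  rw [Matrix.mul_inv_rev, Matrix.mul_inv_rev, nonsing_inv_nonsing_inv _ hdet, mulVec_mulVec,
    Matrix.mul_assoc, Matrix.mul_assoc, mul_nonsing_inv _ hdet, Matrix.mul_one, ← mulVec_mulVec,
    ← hR.mulVec_dotProduct_real, mulVec_mulVec, mul_nonsing_inv _ hdet, one_mulVec]

end QuadraticForms

lemma abs_dotProduct_sub_dotProduct_inv_mulVec_le {d : ℕ} {C : Matrix (Fin d) (Fin d) ℝ}
    (hC : C.PosDef) (u : Fin d → ℝ) :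
    |u ⬝ᵥ u - u ⬝ᵥ C⁻¹ *ᵥ u| ≤ matSpectralNorm (C - 1) * (u ⬝ᵥ C⁻¹ *ᵥ u) := by
  set W := msqrt C⁻¹
  have hWW : W * W = C⁻¹ := msqrt_mul_self hC.inv.posSemidef
  have hW : W.IsHermitian := isHermitian_msqrt hC.inv.posSemidef
  have hWdet : IsUnit W.det := (isUnit_iff_isUnit_det W).mp (isUnit_msqrt hC.inv)
  have hCdet : IsUnit C.det := (isUnit_iff_isUnit_det C).mp hC.isUnit
  have hWCW : W * C * W = 1 := by
    have hCW : C = W⁻¹ * W⁻¹ := by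
      rw [← Matrix.mul_inv_rev, hWW, nonsing_inv_nonsing_inv _ hCdet]
    rw [hCW, ← Matrix.mul_assoc, mul_nonsing_inv _ hWdet, Matrix.one_mul, nonsing_inv_mul _ hWdet]
  have hinv : u ⬝ᵥ C⁻¹ *ᵥ u = W *ᵥ u ⬝ᵥ W *ᵥ u := by
    rw [hW.mulVec_dotProduct_real, mulVec_mulVec, hWW]
  have hself : u ⬝ᵥ u = W *ᵥ u ⬝ᵥ C *ᵥ W *ᵥ u := by
    rw [hW.mulVec_dotProduct_real, mulVec_mulVec, mulVec_mulVec, hWCW, one_mulVec]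
  have hdiff : u ⬝ᵥ u - u ⬝ᵥ C⁻¹ *ᵥ u = W *ᵥ u ⬝ᵥ (C - 1) *ᵥ W *ᵥ u := by
    rw [hinv, hself, sub_mulVec, one_mulVec, dotProduct_sub]
  rw [hdiff, hinv]
  exact abs_dotProduct_mulVec_le_matSpectralNorm _ _

section Sketching

variable {n d m : ℕ} {A : Matrix (Fin n) (Fin d) ℝ} {ν : ℝ} {Λ : Matrix (Fin d) (Fin d) ℝ}

lemma posDef_Hmat (hΛ : Λ.PosDef) (hν : ν ≠ 0) : (Hmat A ν Λ).PosDef :=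
  posDef_transpose_mul_self_add_smul A hΛ (by positivity)

lemma posDef_HSmat (S : Matrix (Fin m) (Fin n) ℝ) (hΛ : Λ.PosDef) (hν : ν ≠ 0) :
    (HSmat A ν Λ S).PosDef := by
  simpa [HSmat, transpose_mul, Matrix.mul_assoc] using
    posDef_transpose_mul_self_add_smul (S * A) hΛ (by positivity : 0 < ν ^ 2)

lemma posDef_CSmat (S : Matrix (Fin m) (Fin n) ℝ) (hH : (Hmat A ν Λ).PosDef)
    (hHS : (HSmat A ν Λ S).PosDef) : (CSmat A ν Λ S).PosDef := by
  have hRinv : IsUnit (msqrt (Hmat A ν Λ))⁻¹ := isUnit_nonsing_inv_iff.mpr (isUnit_msqrt hH)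
  have hC := (Matrix.IsUnit.posDef_star_left_conjugate_iff hRinv).mpr hHS
  rwa [star_eq_conjTranspose, (isHermitian_msqrt hH.posSemidef).inv.eq] at hC

lemma gradf_eq_mulVec (hH : (Hmat A ν Λ).PosDef) (b x : Fin d → ℝ) :
    gradf A ν Λ b x = Hmat A ν Λ *ᵥ (x - xstar A ν Λ b) := by
  rw [gradf, xstar, mulVec_sub, mulVec_mulVec,
    mul_nonsing_inv _ ((isUnit_iff_isUnit_det _).mp hH.isUnit), one_mulVec]

lemma deltaEx_eq (hH : (Hmat A ν Λ).PosDef) (b x : Fin d → ℝ) :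
    deltaEx A ν Λ b x = 1 / 2 * ((msqrt (Hmat A ν Λ))⁻¹ *ᵥ gradf A ν Λ b x ⬝ᵥ
      (msqrt (Hmat A ν Λ))⁻¹ *ᵥ gradf A ν Λ b x) := by
  have hRR := msqrt_mul_self hH.posSemidef
  have hR := isHermitian_msqrt hH.posSemidef
  have hRu := isUnit_msqrt hH
  rw [deltaEx, gradf_eq_mulVec hH]
  set R := msqrt (Hmat A ν Λ)
  rw [← hRR, dotProduct_mulVec_mul_self_eq hR hRu]

lemma deltaApx_eq (hH : (Hmat A ν Λ).PosDef) (S : Matrix (Fin m) (Fin n) ℝ)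
    (b x : Fin d → ℝ) :
    deltaApx A ν Λ b S x = 1 / 2 * ((msqrt (Hmat A ν Λ))⁻¹ *ᵥ gradf A ν Λ b x ⬝ᵥ
      (CSmat A ν Λ S)⁻¹ *ᵥ (msqrt (Hmat A ν Λ))⁻¹ *ᵥ gradf A ν Λ b x) := by
  rw [deltaApx, dotProduct_inv_mulVec_eq_conj (isHermitian_msqrt hH.posSemidef) (isUnit_msqrt hH)]
  rfl

end Sketching

theorem stmt0_general {n d m : ℕ}
    (A : Matrix (Fin n) (Fin d) ℝ) (b : Fin d → ℝ)
    (Λ : Matrix (Fin d) (Fin d) ℝ)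
    (hΛ : (Λ - 1).PosSemidef) (ν : ℝ) (hν : 0 < ν)
    (ρ : ℝ)
    (S : Matrix (Fin m) (Fin n) ℝ)
    (hS : matSpectralNorm (CSmat A ν Λ S - 1) ≤ Real.sqrt ρ)
    (x : Fin d → ℝ) :
    |deltaEx A ν Λ b x - deltaApx A ν Λ b S x| ≤ Real.sqrt ρ * deltaApx A ν Λ b S x := by
  have hΛpd : Λ.PosDef := by simpa using PosDef.one.add_posSemidef hΛ
  have hH := posDef_Hmat (A := A) hΛpd hν.ne'
  have hC := posDef_CSmat S hH (posDef_HSmat S hΛpd hν.ne')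
  rw [deltaEx_eq hH, deltaApx_eq hH]
  set u := (msqrt (Hmat A ν Λ))⁻¹ *ᵥ gradf A ν Λ b x
  have hq : 0 ≤ u ⬝ᵥ (CSmat A ν Λ S)⁻¹ *ᵥ u := by
    simpa using hC.inv.posSemidef.dotProduct_mulVec_nonneg u
  rw [← mul_sub, abs_mul, abs_of_pos one_half_pos]
  calc 1 / 2 * |u ⬝ᵥ u - u ⬝ᵥ (CSmat A ν Λ S)⁻¹ *ᵥ u|
      ≤ 1 / 2 * (matSpectralNorm (CSmat A ν Λ S - 1) * (u ⬝ᵥ (CSmat A ν Λ S)⁻¹ *ᵥ u)) := by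
        gcongr; exact abs_dotProduct_sub_dotProduct_inv_mulVec_le hC u
    _ ≤ 1 / 2 * (Real.sqrt ρ * (u ⬝ᵥ (CSmat A ν Λ S)⁻¹ *ᵥ u)) := by gcongr
    _ = Real.sqrt ρ * (1 / 2 * (u ⬝ᵥ (CSmat A ν Λ S)⁻¹ *ᵥ u)) := by ring

/-- If `‖C_S - I‖₂ ≤ √ρ` with `ρ ∈ (0,1)`, then for every `x`,
`|δ_x - δ̃_x| ≤ √ρ · δ̃_x`. -/
theorem stmt0 {n d m : ℕ} (hd : 1 ≤ d) (hdn : d ≤ n)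
    (A : Matrix (Fin n) (Fin d) ℝ) (b : Fin d → ℝ)
    (Λ : Matrix (Fin d) (Fin d) ℝ) (hΛdiag : Λ.IsDiag)
    (hΛ : (Λ - 1).PosSemidef) (ν : ℝ) (hν : 0 < ν)
    (ρ : ℝ) (hρ : ρ ∈ Set.Ioo (0 : ℝ) 1)
    (S : Matrix (Fin m) (Fin n) ℝ)
    (hS : matSpectralNorm (CSmat A ν Λ S - 1) ≤ Real.sqrt ρ)
    (x : Fin d → ℝ) :
    |deltaEx A ν Λ b x - deltaApx A ν Λ b S x| ≤ Real.sqrt ρ * deltaApx A ν Λ b S x :=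
  stmt0_general A b Λ hΛ ν hν ρ S hS x
end
end

section
/- Let X ∈ ℝ^{d×d} be a symmetric positive definite matrix with λ·I_d ⪯ X ⪯ Λ·I_d for some 0 < λ < Λ, and set μ = 4/(√λ + √Λ)² and β = ((√Λ − √λ)/(√Λ + √λ))². Let (z_t)_{t≥0} be any sequence in ℝ^d satisfying z_{t+1} = (1+β)z_t − μ X z_t − β z_{t−1} for all t ≥ 1, with ‖z_1‖₂² + ‖z_0‖₂² > 0. Then for every t ≥ 1, (‖z_{t+1}‖₂² + ‖z_t‖₂²)/(‖z_1‖₂² + ‖z_0‖₂²) ≤ α(t) · β^{ω(t)}, where ν(t) = log(t)/log(2) + 1, ω(t) = t − 2ν(t), and α(t) = 3^{ν(t)(ν(t)+1)} · (1 + 4β + β²)^{2ν(t)}. -/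
/-!
Diagonalizing `X` splits the dynamics into scalar recurrences `y_{t+1} = a y_t - β y_{t-1}` with
`a = 1 + β - μ e` for an eigenvalue `e ∈ [λ, Λ]`, and the choice of `μ` and `β` makes
`|a| ≤ 2 √β`. Writing `y_t = √β ^ t u_t`, the sequence `u` satisfies the Chebyshev recurrence
`u_{t+1} = 2 c u_t - u_{t-1}` with `|c| ≤ 1`, which conserves `u_{t+1}² - 2 c u_{t+1} u_t + u_t²`;
hence `u` grows at most linearly and
`‖z_{t+1}‖² + ‖z_t‖² ≤ 4 (t + 1)² β ^ (t - 1) (‖z_1‖² + ‖z_0‖²)`.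
The stated rate absorbs the polynomial factor:
`α(t) β ^ ω(t) ≥ 16 ^ ν(t) β ^ (t - ν(t)) ≥ 16 t⁴ β ^ (t - 1)`.
-/

open Matrix Real

section ChebyshevRecurrence

variable {c : ℝ} {u : ℕ → ℝ}

lemma chebyshev_energy_eq (hu : ∀ n, u (n + 2) = 2 * c * u (n + 1) - u n) (n : ℕ) :
    u (n + 1) ^ 2 - 2 * c * u (n + 1) * u n + u n ^ 2 =
      u 1 ^ 2 - 2 * c * u 1 * u 0 + u 0 ^ 2 := by
  induction n with
  | zero => rfl
  | succ n ih => rw [← ih, hu n]; ring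

lemma abs_sub_mul_le_of_chebyshev_rec (hc : |c| ≤ 1)
    (hu : ∀ n, u (n + 2) = 2 * c * u (n + 1) - u n) (n : ℕ) :
    |u (n + 1) - c * u n| ≤ |u 1| + |u 0| := by
  have hc2 : c ^ 2 ≤ 1 := by simpa using sq_le_sq.2 (hc.trans (abs_one).ge)
  have hE : u 1 ^ 2 - 2 * c * u 1 * u 0 + u 0 ^ 2 ≤ (|u 1| + |u 0|) ^ 2 := by
    nlinarith [abs_mul_abs_self (u 1), abs_mul_abs_self (u 0), abs_mul (u 1) (u 0),
      neg_abs_le (c * (u 1 * u 0)), abs_mul c (u 1 * u 0),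
      mul_le_of_le_one_left (abs_nonneg (u 1 * u 0)) hc]
  -- `(u (n + 1) - c * u n) ^ 2` is the conserved energy minus `(1 - c ^ 2) * u n ^ 2`
  refine abs_le_of_sq_le_sq' ?_ (by positivity) |> abs_le.2
  nlinarith [hE, chebyshev_energy_eq hu n, mul_nonneg (sub_nonneg.2 hc2) (sq_nonneg (u n))]

lemma abs_le_of_chebyshev_rec (hc : |c| ≤ 1)
    (hu : ∀ n, u (n + 2) = 2 * c * u (n + 1) - u n) (n : ℕ) :
    |u (n + 1)| ≤ (n + 1) * (|u 1| + |u 0|) := by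
  induction n with
  | zero => simp
  | succ n ih =>
    calc |u (n + 2)| = |(u (n + 2) - c * u (n + 1)) + c * u (n + 1)| := by ring_nf
      _ ≤ |u (n + 2) - c * u (n + 1)| + |c| * |u (n + 1)| := by
          rw [← abs_mul]; exact abs_add_le _ _
      _ ≤ (|u 1| + |u 0|) + 1 * ((n + 1) * (|u 1| + |u 0|)) := by
          gcongr
          exact abs_sub_mul_le_of_chebyshev_rec hc hu (n + 1)
      _ = (↑(n + 1) + 1) * (|u 1| + |u 0|) := by push_cast; ring

end ChebyshevRecurrence

section DampedRecurrence

variable {a r : ℝ} {y : ℕ → ℝ}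

lemma abs_le_of_damped_rec (hr : 0 < r) (ha : |a| ≤ 2 * r)
    (hy : ∀ n, y (n + 2) = a * y (n + 1) - r ^ 2 * y n) (n : ℕ) :
    |y (n + 1)| ≤ (n + 1) * r ^ n * (|y 1| + r * |y 0|) := by
  have h2r : 0 < 2 * r := by positivity
  have hc : |a / (2 * r)| ≤ 1 := by
    rwa [abs_div, abs_of_pos h2r, div_le_one h2r]
  -- `y n / r ^ n` solves the Chebyshev recurrence with `c = a / (2 r)`
  have hu := abs_le_of_chebyshev_rec (u := fun n ↦ y n / r ^ n) hc
    (fun n ↦ by field_simp; rw [hy n]; ring) n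
  simp only [abs_div, abs_pow, abs_of_pos hr, pow_zero, pow_one, div_one] at hu
  rw [div_le_iff₀ (by positivity)] at hu
  calc |y (n + 1)| ≤ (n + 1) * (|y 1| / r + |y 0|) * r ^ (n + 1) := hu
    _ = (n + 1) * r ^ n * (|y 1| + r * |y 0|) := by field_simp; ring

lemma sq_add_sq_le_of_damped_rec (hr0 : 0 < r) (hr1 : r ≤ 1) (ha : |a| ≤ 2 * r)
    (hy : ∀ n, y (n + 2) = a * y (n + 1) - r ^ 2 * y n) (n : ℕ) :
    y (n + 2) ^ 2 + y (n + 1) ^ 2 ≤ 4 * (n + 2) ^ 2 * (r ^ 2) ^ n * (y 1 ^ 2 + y 0 ^ 2) := by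
  set K := (n + 2) * r ^ n * (|y 1| + |y 0|)
  have hK2 : K ^ 2 ≤ 2 * (n + 2) ^ 2 * (r ^ 2) ^ n * (y 1 ^ 2 + y 0 ^ 2) := by
    have : (|y 1| + |y 0|) ^ 2 ≤ 2 * (y 1 ^ 2 + y 0 ^ 2) := by
      nlinarith [sq_abs (y 1), sq_abs (y 0), sq_nonneg (|y 1| - |y 0|)]
    calc K ^ 2 = (n + 2) ^ 2 * (r ^ 2) ^ n * (|y 1| + |y 0|) ^ 2 := by ring
      _ ≤ (n + 2) ^ 2 * (r ^ 2) ^ n * (2 * (y 1 ^ 2 + y 0 ^ 2)) := by gcongr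
      _ = _ := by ring
  have h2 : |y (n + 2)| ≤ K := by
    have hr : r * (|y 1| + r * |y 0|) ≤ |y 1| + |y 0| := by
      nlinarith [abs_nonneg (y 1), abs_nonneg (y 0), mul_le_one₀ hr1 hr0.le hr1]
    calc |y (n + 2)| ≤ (↑(n + 1) + 1) * r ^ (n + 1) * (|y 1| + r * |y 0|) :=
          abs_le_of_damped_rec hr0 ha hy (n + 1)
      _ = (n + 2) * r ^ n * (r * (|y 1| + r * |y 0|)) := by push_cast; ring
      _ ≤ (n + 2) * r ^ n * (|y 1| + |y 0|) := by gcongr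
  have h1 : |y (n + 1)| ≤ K :=
    calc |y (n + 1)| ≤ (n + 1) * r ^ n * (|y 1| + r * |y 0|) := abs_le_of_damped_rec hr0 ha hy n
      _ ≤ (n + 2) * r ^ n * (|y 1| + 1 * |y 0|) := by gcongr; linarith
      _ = K := by ring
  nlinarith [hK2, sq_le_sq' (neg_le_of_abs_le h2) (le_of_abs_le h2),
    sq_le_sq' (neg_le_of_abs_le h1) (le_of_abs_le h1)]

end DampedRecurrence

lemma abs_heavyBall_coeff_le {p q e : ℝ} (hp : 0 ≤ p) (hpq : p < q) (hpe : p ^ 2 ≤ e)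
    (heq : e ≤ q ^ 2) :
    |1 + ((q - p) / (q + p)) ^ 2 - 4 / (p + q) ^ 2 * e| ≤ 2 * ((q - p) / (q + p)) := by
  have hqp : q + p ≠ 0 := by linarith
  have hqp2 : 0 < (q + p) ^ 2 := by positivity
  rw [add_comm p q]
  have h1 : 1 + ((q - p) / (q + p)) ^ 2 - 4 / (q + p) ^ 2 * e
      = (2 * (q ^ 2 + p ^ 2) - 4 * e) / (q + p) ^ 2 := by
    field_simp; ring
  have h2 : 2 * ((q - p) / (q + p)) = 2 * (q ^ 2 - p ^ 2) / (q + p) ^ 2 := by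
    field_simp; ring
  rw [h1, h2, abs_div, abs_of_pos hqp2, div_le_div_iff_of_pos_right hqp2, abs_le]
  constructor <;> linarith

namespace Matrix.IsHermitian

variable {n : Type*} [Fintype n] [DecidableEq n] {A : Matrix n n ℝ} (hA : A.IsHermitian)

lemma star_eigenvectorUnitary_mulVec_dotProduct_self (v : n → ℝ) :
    (star (hA.eigenvectorUnitary : Matrix n n ℝ) *ᵥ v) ⬝ᵥ
      (star (hA.eigenvectorUnitary : Matrix n n ℝ) *ᵥ v) = v ⬝ᵥ v := by
  rw [dotProduct_mulVec, ← mulVec_transpose, mulVec_mulVec, star_eq_conjTranspose,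
    conjTranspose_eq_transpose_of_trivial, transpose_transpose,
    ← conjTranspose_eq_transpose_of_trivial, ← star_eq_conjTranspose,
    Unitary.mul_star_self_of_mem hA.eigenvectorUnitary.2, one_mulVec]

lemma star_eigenvectorUnitary_mulVec_mulVec (v : n → ℝ) :
    star (hA.eigenvectorUnitary : Matrix n n ℝ) *ᵥ (A *ᵥ v) =
      diagonal hA.eigenvalues *ᵥ (star (hA.eigenvectorUnitary : Matrix n n ℝ) *ᵥ v) := by
  have h := hA.conjStarAlgAut_star_eigenvectorUnitary
  simp only [Unitary.conjStarAlgAut_star_apply, Function.comp_def, RCLike.ofReal_real_eq_id,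
    id] at h
  rw [mulVec_mulVec, mulVec_mulVec, ← h, mul_assoc _ _ (star _),
    Unitary.mul_star_self_of_mem hA.eigenvectorUnitary.2, mul_one]

lemma dotProduct_eigenvectorBasis_self (i : n) :
    ⇑(hA.eigenvectorBasis i) ⬝ᵥ ⇑(hA.eigenvectorBasis i) = 1 := by
  have h := real_inner_self_eq_norm_sq (hA.eigenvectorBasis i)
  rwa [hA.eigenvectorBasis.orthonormal.1 i, EuclideanSpace.inner_eq_star_dotProduct,
    star_trivial, one_pow] at h

lemma le_eigenvalues_of_posSemidef_sub {c : ℝ} (h : (A - c • 1).PosSemidef) (i : n) :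
    c ≤ hA.eigenvalues i := by
  have := h.dotProduct_mulVec_nonneg (hA.eigenvectorBasis i)
  simpa [sub_mulVec, mulVec_eigenvectorBasis, smul_mulVec, dotProduct_eigenvectorBasis_self]
    using this

lemma eigenvalues_le_of_posSemidef_sub {c : ℝ} (h : (c • 1 - A).PosSemidef) (i : n) :
    hA.eigenvalues i ≤ c := by
  have := h.dotProduct_mulVec_nonneg (hA.eigenvectorBasis i)
  simpa [sub_mulVec, mulVec_eigenvectorBasis, smul_mulVec, dotProduct_eigenvectorBasis_self]
    using this

end Matrix.IsHermitian

lemma sixteen_rpow_logb_two {t : ℝ} (ht : 0 < t) : (16 : ℝ) ^ Real.logb 2 t = t ^ 4 := by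
  rw [show (16 : ℝ) = 2 ^ (4 : ℝ) by norm_num, ← Real.rpow_mul (by norm_num), mul_comm,
    Real.rpow_mul (by norm_num), Real.rpow_logb (by norm_num) (by norm_num) ht]
  norm_cast

lemma four_mul_sq_mul_pow_le_rate {β : ℝ} (hβ0 : 0 < β) (hβ1 : β ≤ 1) (n : ℕ) :
    4 * ((n : ℝ) + 2) ^ 2 * β ^ n ≤
      ((3 : ℝ) ^ ((Real.log (n + 1) / Real.log 2 + 1) *
            (Real.log (n + 1) / Real.log 2 + 1 + 1)) *
          (1 + 4 * β + β ^ 2) ^ (2 * (Real.log (n + 1) / Real.log 2 + 1))) *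
        β ^ ((n + 1 : ℝ) - 2 * (Real.log (n + 1) / Real.log 2 + 1)) := by
  set t : ℝ := n + 1 with ht
  have ht1 : 1 ≤ t := by simp [ht]
  set ν := Real.log t / Real.log 2 + 1
  have hν : 1 ≤ ν := by
    have := div_nonneg (Real.log_nonneg ht1) (Real.log_nonneg one_le_two)
    linarith
  have h16 : (16 : ℝ) ^ ν = 16 * t ^ 4 := by
    rw [Real.rpow_add_one (by norm_num), ← Real.logb, sixteen_rpow_logb_two (by linarith)]
    ring
  -- `(1 + 4β + β²)² ≥ (1 + 4β)² ≥ 16β`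
  have hsq : 16 * β ≤ (1 + 4 * β + β ^ 2) ^ 2 := by nlinarith [sq_nonneg (1 - 4 * β)]
  calc 4 * ((n : ℝ) + 2) ^ 2 * β ^ n
      ≤ 16 * t ^ 4 * β ^ (t - 1) := by
        rw [show t - 1 = n by simp [ht], Real.rpow_natCast]
        gcongr ?_ * _
        have ht2 : 1 ≤ t ^ 2 := one_le_pow₀ ht1
        nlinarith
    _ ≤ 16 ^ ν * β ^ (t - ν) := by
        rw [h16]
        exact mul_le_mul_of_nonneg_left
          (Real.rpow_le_rpow_of_exponent_ge hβ0 hβ1 (by linarith)) (by positivity)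
    _ = (16 * β) ^ ν * β ^ (t - 2 * ν) := by
        rw [Real.mul_rpow (by norm_num) hβ0.le, mul_assoc, ← Real.rpow_add hβ0]
        ring_nf
    _ ≤ ((1 + 4 * β + β ^ 2) ^ 2) ^ ν * β ^ (t - 2 * ν) := by gcongr
    _ = 1 * (1 + 4 * β + β ^ 2) ^ (2 * ν) * β ^ (t - 2 * ν) := by
        rw [← Real.rpow_natCast_mul (by positivity)]
        simp
    _ ≤ (3 : ℝ) ^ (ν * (ν + 1)) * (1 + 4 * β + β ^ 2) ^ (2 * ν) * β ^ (t - 2 * ν) := by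
        gcongr
        exact Real.one_le_rpow (by norm_num) (by positivity)

theorem dotProduct_self_add_le_of_heavyBall {n : Type*} [Fintype n] [DecidableEq n]
    {A : Matrix n n ℝ} (hA : A.IsHermitian) {a μ r : ℝ} (hr0 : 0 < r) (hr1 : r ≤ 1)
    (ha : ∀ i, |a - μ * hA.eigenvalues i| ≤ 2 * r) {z : ℕ → n → ℝ}
    (hz : ∀ t, z (t + 2) = a • z (t + 1) - μ • (A *ᵥ z (t + 1)) - r ^ 2 • z t) (t : ℕ) :
    z (t + 2) ⬝ᵥ z (t + 2) + z (t + 1) ⬝ᵥ z (t + 1) ≤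
      4 * (t + 2) ^ 2 * (r ^ 2) ^ t * (z 1 ⬝ᵥ z 1 + z 0 ⬝ᵥ z 0) := by
  set U := star (hA.eigenvectorUnitary : Matrix n n ℝ)
  have hw (i : n) (t : ℕ) : (U *ᵥ z (t + 2)) i =
      (a - μ * hA.eigenvalues i) * (U *ᵥ z (t + 1)) i - r ^ 2 * (U *ᵥ z t) i := by
    simp only [hz t, mulVec_sub, mulVec_smul, hA.star_eigenvectorUnitary_mulVec_mulVec,
      mulVec_diagonal, Pi.sub_apply, Pi.smul_apply, smul_eq_mul, U]
    ring
  rw [← hA.star_eigenvectorUnitary_mulVec_dotProduct_self (z (t + 2)),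
    ← hA.star_eigenvectorUnitary_mulVec_dotProduct_self (z (t + 1)),
    ← hA.star_eigenvectorUnitary_mulVec_dotProduct_self (z 1),
    ← hA.star_eigenvectorUnitary_mulVec_dotProduct_self (z 0)]
  simp only [dotProduct, ← Finset.sum_add_distrib, Finset.mul_sum]
  gcongr with i
  simpa only [sq] using
    sq_add_sq_le_of_damped_rec (y := fun t ↦ (U *ᵥ z t) i) hr0 hr1 (ha i) (hw i) t

theorem stmt17_general {d : ℕ} (X : Matrix (Fin d) (Fin d) ℝ)
    (lam Lam : ℝ) (hlam : 0 < lam) (hlamLam : lam < Lam)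
    (hlow : (X - lam • (1 : Matrix (Fin d) (Fin d) ℝ)).PosSemidef)
    (hup : ((Lam • (1 : Matrix (Fin d) (Fin d) ℝ)) - X).PosSemidef)
    (z : ℕ → Fin d → ℝ)
    (hz : ∀ t : ℕ, 1 ≤ t → z (t + 1) =
      (1 + ((Real.sqrt Lam - Real.sqrt lam) / (Real.sqrt Lam + Real.sqrt lam)) ^ 2) • z t
        - (4 / (Real.sqrt lam + Real.sqrt Lam) ^ 2) • X.mulVec (z t)
        - ((Real.sqrt Lam - Real.sqrt lam) / (Real.sqrt Lam + Real.sqrt lam)) ^ 2 • z (t - 1)) :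
    ∀ t : ℕ, 1 ≤ t →
      (z (t + 1) ⬝ᵥ z (t + 1) + z t ⬝ᵥ z t) / (z 1 ⬝ᵥ z 1 + z 0 ⬝ᵥ z 0) ≤
        ((3 : ℝ) ^ ((Real.log t / Real.log 2 + 1) * (Real.log t / Real.log 2 + 1 + 1)) *
            (1 + 4 * ((Real.sqrt Lam - Real.sqrt lam) / (Real.sqrt Lam + Real.sqrt lam)) ^ 2
              + (((Real.sqrt Lam - Real.sqrt lam) / (Real.sqrt Lam + Real.sqrt lam)) ^ 2) ^ 2)
              ^ (2 * (Real.log t / Real.log 2 + 1))) *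
          (((Real.sqrt Lam - Real.sqrt lam) / (Real.sqrt Lam + Real.sqrt lam)) ^ 2)
            ^ ((t : ℝ) - 2 * (Real.log t / Real.log 2 + 1)) := by
  intro t ht
  obtain ⟨n, rfl⟩ := Nat.exists_eq_add_of_le' ht
  have hp : 0 < √lam := Real.sqrt_pos.2 hlam
  have hpq : √lam < √Lam := Real.sqrt_lt_sqrt hlam.le hlamLam
  set r := (√Lam - √lam) / (√Lam + √lam)
  have hr0 : 0 < r := div_pos (by linarith) (by linarith)
  have hr1 : r ≤ 1 := (div_le_one (by linarith)).2 (by linarith)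
  have hX : X.IsHermitian := by simpa using hlow.isHermitian.add (isHermitian_one.smul (.all lam))
  have hcoeff (i : Fin d) : |1 + r ^ 2 - 4 / (√lam + √Lam) ^ 2 * hX.eigenvalues i| ≤ 2 * r :=
    abs_heavyBall_coeff_le hp.le hpq
      ((Real.sq_sqrt hlam.le).le.trans (hX.le_eigenvalues_of_posSemidef_sub hlow i))
      ((hX.eigenvalues_le_of_posSemidef_sub hup i).trans (Real.sq_sqrt (by linarith)).ge)
  have hbound := dotProduct_self_add_le_of_heavyBall hX hr0 hr1 hcoeff
    (fun t ↦ by simpa using hz (t + 1) (by omega)) n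
  have hrate := four_mul_sq_mul_pow_le_rate (pow_pos hr0 2) (pow_le_one₀ hr0.le hr1) n
  have hS : 0 ≤ z 1 ⬝ᵥ z 1 + z 0 ⬝ᵥ z 0 :=
    add_nonneg (dotProduct_star_self_nonneg (z 1)) (dotProduct_star_self_nonneg (z 0))
  push_cast
  have hrate_nonneg := (by positivity : (0 : ℝ) ≤ 4 * (n + 2) ^ 2 * (r ^ 2) ^ n).trans hrate
  exact div_le_of_le_mul₀ hS hrate_nonneg (hbound.trans (mul_le_mul_of_nonneg_right hrate hS))

/-- Finite-time guarantee for the heavy-ball dynamical system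
`z_{t+1} = (1+β)z_t - μXz_t - βz_{t-1}` with `λI ⪯ X ⪯ ΛI`,
`μ = 4/(√λ+√Λ)²`, `β = ((√Λ-√λ)/(√Λ+√λ))²`. -/
theorem stmt17 {d : ℕ} (X : Matrix (Fin d) (Fin d) ℝ)
    (lam Lam : ℝ) (hlam : 0 < lam) (hlamLam : lam < Lam)
    (hlow : (X - lam • (1 : Matrix (Fin d) (Fin d) ℝ)).PosSemidef)
    (hup : ((Lam • (1 : Matrix (Fin d) (Fin d) ℝ)) - X).PosSemidef)
    (z : ℕ → Fin d → ℝ)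
    (hz : ∀ t : ℕ, 1 ≤ t → z (t + 1) =
      (1 + ((Real.sqrt Lam - Real.sqrt lam) / (Real.sqrt Lam + Real.sqrt lam)) ^ 2) • z t
        - (4 / (Real.sqrt lam + Real.sqrt Lam) ^ 2) • X.mulVec (z t)
        - ((Real.sqrt Lam - Real.sqrt lam) / (Real.sqrt Lam + Real.sqrt lam)) ^ 2 • z (t - 1))
    (h0 : 0 < z 1 ⬝ᵥ z 1 + z 0 ⬝ᵥ z 0) :
    ∀ t : ℕ, 1 ≤ t →
      (z (t + 1) ⬝ᵥ z (t + 1) + z t ⬝ᵥ z t) / (z 1 ⬝ᵥ z 1 + z 0 ⬝ᵥ z 0) ≤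
        ((3 : ℝ) ^ ((Real.log t / Real.log 2 + 1) * (Real.log t / Real.log 2 + 1 + 1)) *
            (1 + 4 * ((Real.sqrt Lam - Real.sqrt lam) / (Real.sqrt Lam + Real.sqrt lam)) ^ 2
              + (((Real.sqrt Lam - Real.sqrt lam) / (Real.sqrt Lam + Real.sqrt lam)) ^ 2) ^ 2)
              ^ (2 * (Real.log t / Real.log 2 + 1))) *
          (((Real.sqrt Lam - Real.sqrt lam) / (Real.sqrt Lam + Real.sqrt lam)) ^ 2)
            ^ ((t : ℝ) - 2 * (Real.log t / Real.log 2 + 1)) :=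
  stmt17_general X lam Lam hlam hlamLam hlow hup z hz
end

section
/- Let 0 < λ ≤ Λ, set μ = 4/(√λ + √Λ)² and β = ((√Λ − √λ)/(√Λ + √λ))², and assume β > 0. For any γ ∈ [λ, Λ], let a = 1 + β − μγ and X = [[a, −β], [1, 0]] ∈ ℝ^{2×2}. Then ‖X‖₂² / ‖X²‖₂ ≤ (1 + 4β + β²)/β. -/
/-!
The spectral norm is at most the Frobenius norm and at least the modulus of any entry. Hence
`‖X‖₂² ≤ a² + β² + 1` and `‖X²‖₂ ≥ |(X²)₁₁| = β`. For `γ ∈ [λ, Λ]` one has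
`a (√λ + √Λ)² = 2(λ + Λ) - 4γ ∈ [-2(Λ - λ), 2(Λ - λ)]`, which gives `a² ≤ 4β`.
-/

open Matrix Real
open scoped Classical

noncomputable section

theorem matSpectralNorm_nonneg {k l : ℕ} (M : Matrix (Fin k) (Fin l) ℝ) :
    0 ≤ matSpectralNorm M :=
  norm_nonneg _

theorem abs_apply_le_matSpectralNorm {k l : ℕ} (M : Matrix (Fin k) (Fin l) ℝ) (i : Fin k)
    (j : Fin l) : |M i j| ≤ matSpectralNorm M := by
  have h := (LinearMap.toContinuousLinearMap (Matrix.toEuclideanLin M)).le_opNorm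
    (EuclideanSpace.single j 1)
  rw [PiLp.norm_single, norm_one, mul_one] at h
  refine le_trans ?_ h
  have := PiLp.norm_apply_le ((LinearMap.toContinuousLinearMap (Matrix.toEuclideanLin M))
    (EuclideanSpace.single j 1)) i
  simpa [Matrix.toLpLin_apply, Matrix.mulVec, dotProduct, PiLp.single_apply] using this

theorem matSpectralNorm_le_sqrt_sum_sq {k l : ℕ} (M : Matrix (Fin k) (Fin l) ℝ) :
    matSpectralNorm M ≤ √(∑ i, ∑ j, M i j ^ 2) := by
  refine ContinuousLinearMap.opNorm_le_bound _ (Real.sqrt_nonneg _) fun v ↦ ?_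
  rw [EuclideanSpace.norm_eq, EuclideanSpace.norm_eq, ← Real.sqrt_mul (by positivity)]
  refine Real.sqrt_le_sqrt ?_
  simp only [Real.norm_eq_abs, sq_abs]
  rw [Finset.sum_mul]
  refine Finset.sum_le_sum fun i _ ↦ ?_
  simpa [Matrix.toLpLin_apply, Matrix.mulVec, dotProduct] using
    Finset.sum_mul_sq_le_sq_mul_sq Finset.univ (M i) (fun j ↦ v j)

theorem sq_one_add_sq_sub_mul_le {p q γ : ℝ} (hpq : p + q ≠ 0) (hpγ : p ^ 2 ≤ γ)
    (hγq : γ ≤ q ^ 2) :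
    (1 + ((q - p) / (q + p)) ^ 2 - 4 / (p + q) ^ 2 * γ) ^ 2 ≤ 4 * ((q - p) / (q + p)) ^ 2 := by
  have hqp : q + p ≠ 0 := by rwa [add_comm]
  have hs : 0 < ((p + q) ^ 2) ^ 2 := by positivity
  have ha : (1 + ((q - p) / (q + p)) ^ 2 - 4 / (p + q) ^ 2 * γ) * (p + q) ^ 2
      = 2 * (p ^ 2 + q ^ 2) - 4 * γ := by
    field_simp; ring
  have hb : 4 * ((q - p) / (q + p)) ^ 2 * ((p + q) ^ 2) ^ 2 = (2 * (q ^ 2 - p ^ 2)) ^ 2 := by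
    field_simp; ring
  refine le_of_mul_le_mul_right ?_ hs
  rw [hb, ← mul_pow, ha]
  exact sq_le_sq' (by linarith) (by linarith)

section CompanionMatrix

variable (a b : ℝ)

theorem matSpectralNorm_sq_le_companion :
    matSpectralNorm !![a, -b; 1, 0] ^ 2 ≤ a ^ 2 + b ^ 2 + 1 := by
  have h := matSpectralNorm_le_sqrt_sum_sq !![a, -b; 1, 0]
  simp only [Fin.sum_univ_two, of_apply, cons_val', cons_val_zero, cons_val_one,
    cons_val_fin_one, neg_sq, one_pow, zero_pow two_ne_zero, add_zero] at h
  have h2 := pow_le_pow_left₀ (matSpectralNorm_nonneg _) h 2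
  rwa [Real.sq_sqrt (by positivity)] at h2

theorem abs_le_matSpectralNorm_companion_sq :
    |b| ≤ matSpectralNorm (!![a, -b; 1, 0] ^ 2) := by
  have h := abs_apply_le_matSpectralNorm (!![a, -b; 1, 0] ^ 2) 1 1
  rwa [show (!![a, -b; 1, 0] ^ 2) 1 1 = -b by simp [sq], abs_neg] at h

theorem matSpectralNorm_companion_sq_div_le (hb : 0 < b) (hab : a ^ 2 ≤ 4 * b) :
    matSpectralNorm !![a, -b; 1, 0] ^ 2 / matSpectralNorm (!![a, -b; 1, 0] ^ 2) ≤
      (1 + 4 * b + b ^ 2) / b := by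
  refine div_le_div₀ (by positivity) ?_ hb ?_
  · linarith [matSpectralNorm_sq_le_companion a b]
  · simpa [abs_of_pos hb] using abs_le_matSpectralNorm_companion_sq a b

end CompanionMatrix

theorem stmt19_general (lam Lam : ℝ) (hlam : 0 < lam)
    (hβ : 0 < ((Real.sqrt Lam - Real.sqrt lam) / (Real.sqrt Lam + Real.sqrt lam)) ^ 2)
    (γ : ℝ) (hγ : γ ∈ Set.Icc lam Lam) :
    matSpectralNorm
        (!![1 + ((Real.sqrt Lam - Real.sqrt lam) / (Real.sqrt Lam + Real.sqrt lam)) ^ 2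
              - (4 / (Real.sqrt lam + Real.sqrt Lam) ^ 2) * γ,
            -(((Real.sqrt Lam - Real.sqrt lam) / (Real.sqrt Lam + Real.sqrt lam)) ^ 2);
            1, 0] : Matrix (Fin 2) (Fin 2) ℝ) ^ 2 /
      matSpectralNorm
        ((!![1 + ((Real.sqrt Lam - Real.sqrt lam) / (Real.sqrt Lam + Real.sqrt lam)) ^ 2
              - (4 / (Real.sqrt lam + Real.sqrt Lam) ^ 2) * γ,
            -(((Real.sqrt Lam - Real.sqrt lam) / (Real.sqrt Lam + Real.sqrt lam)) ^ 2);
            1, 0] : Matrix (Fin 2) (Fin 2) ℝ) ^ 2) ≤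
      (1 + 4 * ((Real.sqrt Lam - Real.sqrt lam) / (Real.sqrt Lam + Real.sqrt lam)) ^ 2
          + (((Real.sqrt Lam - Real.sqrt lam) / (Real.sqrt Lam + Real.sqrt lam)) ^ 2) ^ 2) /
        ((Real.sqrt Lam - Real.sqrt lam) / (Real.sqrt Lam + Real.sqrt lam)) ^ 2 := by
  obtain ⟨hlamγ, hγLam⟩ := hγ
  have hsum : √lam + √Lam ≠ 0 := (add_pos_of_pos_of_nonneg (sqrt_pos.2 hlam) (sqrt_nonneg _)).ne'
  have hsq_le : (1 + ((√Lam - √lam) / (√Lam + √lam)) ^ 2 - 4 / (√lam + √Lam) ^ 2 * γ) ^ 2 ≤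
      4 * ((√Lam - √lam) / (√Lam + √lam)) ^ 2 :=
    sq_one_add_sq_sub_mul_le hsum (by rwa [sq_sqrt hlam.le])
      (by rwa [sq_sqrt (by linarith)])
  exact matSpectralNorm_companion_sq_div_le _ _ hβ hsq_le

/-- For `X = [[1+β-μγ, -β],[1,0]]` with `γ ∈ [λ,Λ]`,
`μ = 4/(√λ+√Λ)²`, `β = ((√Λ-√λ)/(√Λ+√λ))² > 0`, one has
`‖X‖₂²/‖X²‖₂ ≤ (1+4β+β²)/β`. -/
theorem stmt19 (lam Lam : ℝ) (hlam : 0 < lam) (hlamLam : lam ≤ Lam)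
    (hβ : 0 < ((Real.sqrt Lam - Real.sqrt lam) / (Real.sqrt Lam + Real.sqrt lam)) ^ 2)
    (γ : ℝ) (hγ : γ ∈ Set.Icc lam Lam) :
    matSpectralNorm
        (!![1 + ((Real.sqrt Lam - Real.sqrt lam) / (Real.sqrt Lam + Real.sqrt lam)) ^ 2
              - (4 / (Real.sqrt lam + Real.sqrt Lam) ^ 2) * γ,
            -(((Real.sqrt Lam - Real.sqrt lam) / (Real.sqrt Lam + Real.sqrt lam)) ^ 2);
            1, 0] : Matrix (Fin 2) (Fin 2) ℝ) ^ 2 /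
      matSpectralNorm
        ((!![1 + ((Real.sqrt Lam - Real.sqrt lam) / (Real.sqrt Lam + Real.sqrt lam)) ^ 2
              - (4 / (Real.sqrt lam + Real.sqrt Lam) ^ 2) * γ,
            -(((Real.sqrt Lam - Real.sqrt lam) / (Real.sqrt Lam + Real.sqrt lam)) ^ 2);
            1, 0] : Matrix (Fin 2) (Fin 2) ℝ) ^ 2) ≤
      (1 + 4 * ((Real.sqrt Lam - Real.sqrt lam) / (Real.sqrt Lam + Real.sqrt lam)) ^ 2
          + (((Real.sqrt Lam - Real.sqrt lam) / (Real.sqrt Lam + Real.sqrt lam)) ^ 2) ^ 2) /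
        ((Real.sqrt Lam - Real.sqrt lam) / (Real.sqrt Lam + Real.sqrt lam)) ^ 2 :=
  stmt19_general lam Lam hlam hβ γ hγ
end
end
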